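/- Let λ ∈ [0,1] and θ₁, θ₂, θ₃ ∈ [0,1). For signs s₂, s₃ ∈ {−1, +1}, write N(s₂,s₃) = θ₁ + s₂θ₂ + s₃θ₃ + s₂s₃·θ₁θ₂θ₃ and D(s₂,s₃) = 1 + λ·( s₂θ₁θ₂ + s₂s₃θ₂θ₃ + s₃θ₃θ₁ ). Then (1/4)·Σ_{s₂,s₃ ∈ {−1,+1}} N(s₂,s₃)·artanh( λ·N(s₂,s₃) / D(s₂,s₃) ) ≤ λ·( θ₁·artanh(θ₁) + θ₂·artanh(θ₂) + θ₃·artanh(θ₃) ). -/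

import Mathlib

/-
Write `u = (θ₁, s₂θ₂, s₃θ₃)`, `P = ∏ (1 + uᵢ)` and `Q = ∏ (1 - uᵢ)`. Then `2N = P - Q`,
`2 artanh (λN/D) = log (1 + λ(P - 1)) - log (1 + λ(Q - 1))` and `2 ∑ artanh uᵢ = log P - log Q`.
Replacing `u` by `-u` swaps `P` and `Q`, so we may take `Q ≤ P`, and each summand is then at most
`λ N ∑ artanh uᵢ` as soon as `F λ = λ (log P - log Q) - log (1 + λ(P - 1)) + log (1 + λ(Q - 1))`
is nonnegative on `[0, 1]`; summing over the signs gives the right-hand side.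
Since `F 0 = F 1 = 0`, it suffices that
`F' λ = log P - log Q - (P - Q) / ((1 + λ(P - 1)) (1 + λ(Q - 1)))` is nonnegative on an initial
segment of `[0, 1]` and nonpositive afterwards. The denominator is a quadratic in `λ` which is
decreasing on `[0, 1]` unless `P + Q ≥ 2`, and in that case it only remains to see `F' 0 ≥ 0`,
i.e. `N ≤ ∑ artanh uᵢ` whenever `u₁u₂ + u₂u₃ + u₃u₁ ≥ 0`. After sorting the `uᵢ` this follows
from `artanh x ≥ x + x³/3` and the monotonicity of `artanh x - x`.
-/

/-- The real inverse hyperbolic tangent, `artanh x = ½ · log((1+x)/(1−x))`. -/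
noncomputable def artanh (x : ℝ) : ℝ := (1 / 2) * Real.log ((1 + x) / (1 - x))

/-- Numerator `N(s₂,s₃) = θ₁ + s₂θ₂ + s₃θ₃ + s₂s₃·θ₁θ₂θ₃`. -/
def N (θ₁ θ₂ θ₃ s₂ s₃ : ℝ) : ℝ := θ₁ + s₂ * θ₂ + s₃ * θ₃ + s₂ * s₃ * (θ₁ * θ₂ * θ₃)

/-- Denominator `D(s₂,s₃) = 1 + λ·(s₂θ₁θ₂ + s₂s₃θ₂θ₃ + s₃θ₃θ₁)`. -/
def D (lam θ₁ θ₂ θ₃ s₂ s₃ : ℝ) : ℝ :=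
  1 + lam * (s₂ * (θ₁ * θ₂) + s₂ * s₃ * (θ₂ * θ₃) + s₃ * (θ₃ * θ₁))

open Set
open Real (log)

lemma artanh_neg (x : ℝ) : artanh (-x) = -artanh x := by
  rw [artanh, artanh, ← sub_eq_add_neg, sub_neg_eq_add,
    show (1 - x) / (1 + x) = ((1 + x) / (1 - x))⁻¹ from (inv_div _ _).symm, Real.log_inv]
  ring

@[simp] lemma artanh_zero : artanh 0 = 0 := by simp [artanh]

lemma two_mul_artanh_div {m d : ℝ} (hpos : 0 < d + m) (hneg : 0 < d - m) :
    2 * artanh (m / d) = log (d + m) - log (d - m) := by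
  have hd : d ≠ 0 := by linarith
  rw [artanh, one_add_div hd, one_sub_div hd, div_div_div_cancel_right₀ hd,
    Real.log_div hpos.ne' hneg.ne']
  ring

lemma two_mul_artanh {x : ℝ} (hx : x ∈ Ioo (-1 : ℝ) 1) :
    2 * artanh x = log (1 + x) - log (1 - x) := by
  simpa using two_mul_artanh_div (d := 1) (m := x) (by linarith [hx.1]) (by linarith [hx.2])

lemma hasDerivAt_artanh {x : ℝ} (hx : x ∈ Ioo (-1 : ℝ) 1) :
    HasDerivAt artanh (1 / (1 - x ^ 2)) x := by
  obtain ⟨h₁, h₂⟩ := hx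
  have hd : HasDerivAt (fun y : ℝ => (1 + y) / (1 - y))
      ((1 * (1 - x) - (1 + x) * (-1)) / (1 - x) ^ 2) x :=
    ((hasDerivAt_id x).const_add 1).div ((hasDerivAt_id x).neg.const_add 1) (by linarith)
  refine ((hd.log (div_pos (by linarith) (by linarith)).ne').const_mul (1 / 2 : ℝ)).congr_deriv ?_
  have : (1 : ℝ) + x ≠ 0 := by linarith
  have : (1 : ℝ) - x ≠ 0 := by linarith
  have : (1 : ℝ) - x ^ 2 ≠ 0 := by nlinarith
  field_simp
  ring

lemma monotoneOn_artanh_sub_cubic :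
    MonotoneOn (fun x => artanh x - x - x ^ 3 / 3) (Ioo (-1 : ℝ) 1) := by
  have hderiv : ∀ x ∈ Ioo (-1 : ℝ) 1,
      HasDerivAt (fun x => artanh x - x - x ^ 3 / 3) (x ^ 4 / (1 - x ^ 2)) x := by
    intro x hx
    refine (((hasDerivAt_artanh hx).sub (hasDerivAt_id x)).sub
      ((hasDerivAt_pow 3 x).div_const 3)).congr_deriv ?_
    have : (1 : ℝ) - x ^ 2 ≠ 0 := by nlinarith [hx.1, hx.2]
    field_simp
    ring
  refine monotoneOn_of_hasDerivWithinAt_nonneg (f' := fun x => x ^ 4 / (1 - x ^ 2)) (convex_Ioo _ _)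
    (fun x hx => (hderiv x hx).continuousAt.continuousWithinAt) ?_ ?_ <;> rw [interior_Ioo]
  · exact fun x hx => (hderiv x hx).hasDerivWithinAt
  · intro x hx
    have : 0 < 1 - x ^ 2 := by nlinarith [hx.1, hx.2]
    positivity

lemma self_add_cube_div_three_le_artanh {x : ℝ} (h₀ : 0 ≤ x) (h₁ : x < 1) :
    x + x ^ 3 / 3 ≤ artanh x := by
  have := monotoneOn_artanh_sub_cubic ⟨by norm_num, by norm_num⟩ ⟨by linarith, h₁⟩ h₀
  norm_num at this
  linarith

lemma monotoneOn_artanh_sub_self : MonotoneOn (fun x => artanh x - x) (Ioo (-1 : ℝ) 1) := by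
  refine (monotoneOn_artanh_sub_cubic.add (g := fun x => x ^ 3 / 3)
    (fun x _ y _ hxy => ?_)).congr fun x _ => ?_
  · exact div_le_div_of_nonneg_right ((Odd.pow_le_pow (by decide)).2 hxy) (by norm_num)
  · simp only
    ring

lemma sum_add_prod_le_sum_artanh {u₁ u₂ u₃ : ℝ} (h₁ : u₁ ∈ Ioo (-1 : ℝ) 1)
    (h₂ : u₂ ∈ Ioo (-1 : ℝ) 1) (h₃ : u₃ ∈ Ioo (-1 : ℝ) 1)
    (hσ : 0 ≤ u₁ * u₂ + u₂ * u₃ + u₃ * u₁) (hN : 0 ≤ u₁ + u₂ + u₃ + u₁ * u₂ * u₃) :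
    u₁ + u₂ + u₃ + u₁ * u₂ * u₃ ≤ artanh u₁ + artanh u₂ + artanh u₃ := by
  wlog h₁₂ : u₂ ≤ u₁ generalizing u₁ u₂
  · have := this (h₁ := h₂) (h₂ := h₁) (by linarith) (by linarith) (by linarith)
    linarith
  wlog h₁₃ : u₃ ≤ u₁ generalizing u₁ u₂ u₃
  · have := this (h₁ := h₃) (h₃ := h₁) (h₂ := h₂) (hσ := by linarith) (hN := by linarith)
      (h₁₂ := by linarith) (h₁₃ := by linarith)
    linarith
  wlog h₂₃ : u₃ ≤ u₂ generalizing u₂ u₃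
  · have := this (h₂ := h₃) (h₃ := h₂) (hσ := by linarith) (hN := by linarith)
      (h₁₂ := h₁₃) (h₁₃ := h₁₂) (h₂₃ := by linarith)
    linarith
  obtain ⟨h₁', h₁''⟩ := h₁
  obtain ⟨h₂', h₂''⟩ := h₂
  obtain ⟨h₃', h₃''⟩ := h₃
  have h₂₀ : 0 ≤ u₂ := by
    -- two negative entries would force `(u₂ + u₃)² ≤ u₂ u₃ (1 + u₂ u₃) < 2 u₂ u₃`
    by_contra! h₂₀
    have hp : 0 < u₂ * u₃ := mul_pos_of_neg_of_neg h₂₀ (by linarith)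
    have hp₁ : u₂ * u₃ < 1 := by nlinarith
    have hu₁ : 0 < u₁ := by nlinarith
    have : (u₂ + u₃) ^ 2 ≤ u₂ * u₃ * (1 + u₂ * u₃) := by nlinarith [mul_nonneg hu₁.le hp.le]
    nlinarith [sq_nonneg (u₂ - u₃)]
  rcases le_or_gt 0 u₃ with h₃₀ | h₃₀
  · have := self_add_cube_div_three_le_artanh (h₂₀.trans h₁₂) h₁''
    have := self_add_cube_div_three_le_artanh h₂₀ h₂''
    have := self_add_cube_div_three_le_artanh h₃₀ h₃''
    nlinarith [sq_nonneg (u₁ - u₂), sq_nonneg (u₂ - u₃), sq_nonneg (u₃ - u₁),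
      mul_nonneg (h₂₀.trans h₁₂) h₂₀, mul_nonneg h₂₀ h₃₀, mul_nonneg h₃₀ (h₂₀.trans h₁₂)]
  · have h₁₃' : -u₃ ≤ u₁ := by
      by_contra! h
      have : u₁ + u₂ ≤ 0 := by nlinarith
      obtain rfl : u₂ = 0 := by linarith
      obtain rfl : u₁ = 0 := by linarith
      linarith
    have hg₁₃ := monotoneOn_artanh_sub_self ⟨by linarith, by linarith⟩ ⟨h₁', h₁''⟩ h₁₃'
    have hg₂ := monotoneOn_artanh_sub_self ⟨by norm_num, by norm_num⟩ ⟨h₂', h₂''⟩ h₂₀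
    simp only [artanh_neg, artanh_zero, sub_zero] at hg₁₃ hg₂
    nlinarith [mul_nonneg (h₂₀.trans h₁₂) h₂₀]

lemma min_le_of_hasDerivAt_unimodal {f f' : ℝ → ℝ} {a b x : ℝ}
    (hf : ContinuousOn f (Icc a b)) (hf' : ∀ y ∈ Ioo a b, HasDerivAt f (f' y) y)
    (hsign : ∀ y ∈ Ioo a b, ∀ z ∈ Ioo a b, y ≤ z → 0 ≤ f' z → 0 ≤ f' y)
    (hx : x ∈ Icc a b) : min (f a) (f b) ≤ f x := by
  by_cases hpos : ∃ z ∈ Ioo x b, 0 ≤ f' z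
  · obtain ⟨z, hz, hz₀⟩ := hpos
    have hmono : MonotoneOn f (Icc a x) := by
      refine monotoneOn_of_hasDerivWithinAt_nonneg (f' := f') (convex_Icc a x)
        (hf.mono (Icc_subset_Icc_right hx.2)) ?_ ?_ <;> rw [interior_Icc] <;> intro y hy
      · exact (hf' y ⟨hy.1, hy.2.trans_le hx.2⟩).hasDerivWithinAt
      · exact hsign y ⟨hy.1, hy.2.trans_le hx.2⟩ z ⟨hx.1.trans_lt hz.1, hz.2⟩
          (hy.2.trans hz.1).le hz₀
    exact min_le_of_left_le (hmono (left_mem_Icc.2 hx.1) (right_mem_Icc.2 hx.1) hx.1)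
  · push Not at hpos
    have hanti : AntitoneOn f (Icc x b) := by
      refine antitoneOn_of_hasDerivWithinAt_nonpos (f' := f') (convex_Icc x b)
        (hf.mono (Icc_subset_Icc_left hx.1)) ?_ ?_ <;> rw [interior_Icc] <;> intro y hy
      · exact (hf' y ⟨hx.1.trans_lt hy.1, hy.2⟩).hasDerivWithinAt
      · exact (hpos y hy).le
    exact min_le_of_right_le (hanti (left_mem_Icc.2 hx.2) (right_mem_Icc.2 hx.2) hx.2)

lemma one_add_mul_sub_one_pos {x t : ℝ} (hx : 0 < x) (ht : t ∈ Icc (0 : ℝ) 1) :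
    0 < 1 + t * (x - 1) := by
  obtain ⟨h₀, h₁⟩ := ht
  rcases h₁.lt_or_eq with h₁ | rfl
  · nlinarith
  · linarith

lemma affine_mul_affine_le_or_one_le {P Q x y : ℝ} (hPQ : 0 < P + Q) (hx : 0 ≤ x) (hxy : x ≤ y)
    (hy : y ≤ 1) :
    (1 + y * (P - 1)) * (1 + y * (Q - 1)) ≤ (1 + x * (P - 1)) * (1 + x * (Q - 1)) ∨
      2 ≤ P + Q ∧ 1 ≤ (1 + x * (P - 1)) * (1 + x * (Q - 1)) := by
  set c := (P - 1) * (Q - 1)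
  -- the left side minus the right side is `(y - x) * (P + Q - 2 + (x + y) * c)`
  by_cases hG : P + Q - 2 + (x + y) * c ≤ 0
  · left
    nlinarith [mul_nonneg (sub_nonneg.2 hxy) (neg_nonneg.2 hG)]
  · replace hG := (not_le.1 hG).le
    have h2 : 2 ≤ P + Q := by
      by_contra! h2
      rcases le_or_gt c 0 with hc | hc
      · nlinarith [mul_nonneg (add_nonneg hx (hx.trans hxy)) (neg_nonneg.2 hc)]
      · nlinarith [sq_nonneg (P - Q), mul_pos hPQ (by linarith : 0 < 2 - (P + Q)),
          mul_le_mul_of_nonneg_right (by linarith : x + y ≤ 2) hc.le]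
    refine Or.inr ⟨h2, ?_⟩
    rcases le_or_gt 0 c with hc | hc
    · nlinarith [mul_nonneg hx (add_nonneg (sub_nonneg.2 h2) (mul_nonneg hx hc))]
    · nlinarith [mul_nonneg hx hG, mul_nonneg hx (mul_nonneg (hx.trans hxy) (neg_nonneg.2 hc.le))]

lemma log_interp_sub_le {P Q t : ℝ} (hQ : 0 < Q) (hQP : Q ≤ P)
    (hPQ : 2 ≤ P + Q → P - Q ≤ log P - log Q) (ht : t ∈ Icc (0 : ℝ) 1) :
    log (1 + t * (P - 1)) - log (1 + t * (Q - 1)) ≤ t * (log P - log Q) := by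
  have hP : 0 < P := hQ.trans_le hQP
  set L := log P - log Q
  have hL : 0 ≤ L := sub_nonneg.2 (Real.log_le_log hQ hQP)
  set F := fun s => s * L - (log (1 + s * (P - 1)) - log (1 + s * (Q - 1)))
  set F' := fun s => L - (P - Q) / ((1 + s * (P - 1)) * (1 + s * (Q - 1)))
  have hF : ∀ s ∈ Icc (0 : ℝ) 1, HasDerivAt F (F' s) s := by
    intro s hs
    have hA := one_add_mul_sub_one_pos hP hs
    have hB := one_add_mul_sub_one_pos hQ hs
    have dA : HasDerivAt (fun s => 1 + s * (P - 1)) (P - 1) s := by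
      simpa using ((hasDerivAt_id s).mul_const (P - 1)).const_add 1
    have dB : HasDerivAt (fun s => 1 + s * (Q - 1)) (Q - 1) s := by
      simpa using ((hasDerivAt_id s).mul_const (Q - 1)).const_add 1
    refine (((hasDerivAt_id s).mul_const L).sub
      ((dA.log hA.ne').sub (dB.log hB.ne'))).congr_deriv ?_
    simp only [F']
    rw [one_mul, div_sub_div _ _ hA.ne' hB.ne']
    congr 2
    ring
  have hsign : ∀ x ∈ Ioo (0 : ℝ) 1, ∀ y ∈ Ioo (0 : ℝ) 1, x ≤ y → 0 ≤ F' y → 0 ≤ F' x := by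
    intro x hx y hy hxy hFy
    have hx' : x ∈ Icc (0 : ℝ) 1 := Ioo_subset_Icc_self hx
    have hy' : y ∈ Icc (0 : ℝ) 1 := Ioo_subset_Icc_self hy
    simp only [F', sub_nonneg, div_le_iff₀ (mul_pos (one_add_mul_sub_one_pos hP hx')
      (one_add_mul_sub_one_pos hQ hx')), div_le_iff₀ (mul_pos (one_add_mul_sub_one_pos hP hy')
      (one_add_mul_sub_one_pos hQ hy'))] at hFy ⊢
    rcases affine_mul_affine_le_or_one_le (P := P) (Q := Q) (by linarith) hx.1.le hxy hy.2.le
      with h | ⟨h2, h1⟩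
    · nlinarith [mul_le_mul_of_nonneg_left h hL]
    · nlinarith [hPQ h2, mul_le_mul_of_nonneg_left h1 hL]
  have := min_le_of_hasDerivAt_unimodal (fun s hs => (hF s hs).continuousAt.continuousWithinAt)
    (fun s hs => hF s (Ioo_subset_Icc_self hs)) hsign ht
  have h₀ : F 0 = 0 := by simp [F]
  have h₁ : F 1 = 0 := by simp [F, L]
  rw [h₀, h₁, min_self] at this
  simp only [F] at this
  linarith

lemma sum_add_prod_mul_artanh_le {lam u₁ u₂ u₃ : ℝ} (hlam : lam ∈ Icc (0 : ℝ) 1)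
    (h₁ : u₁ ∈ Ioo (-1 : ℝ) 1) (h₂ : u₂ ∈ Ioo (-1 : ℝ) 1) (h₃ : u₃ ∈ Ioo (-1 : ℝ) 1) :
    (u₁ + u₂ + u₃ + u₁ * u₂ * u₃) *
        artanh (lam * (u₁ + u₂ + u₃ + u₁ * u₂ * u₃) / (1 + lam * (u₁ * u₂ + u₂ * u₃ + u₃ * u₁)))
      ≤ lam * (u₁ + u₂ + u₃ + u₁ * u₂ * u₃) * (artanh u₁ + artanh u₂ + artanh u₃) := by
  wlog hN : 0 ≤ u₁ + u₂ + u₃ + u₁ * u₂ * u₃ generalizing u₁ u₂ u₃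
  · have := this (u₁ := -u₁) (u₂ := -u₂) (u₃ := -u₃) ⟨by linarith [h₁.2], by linarith [h₁.1]⟩
      ⟨by linarith [h₂.2], by linarith [h₂.1]⟩ ⟨by linarith [h₃.2], by linarith [h₃.1]⟩
      (by linarith)
    rw [show -u₁ + -u₂ + -u₃ + -u₁ * -u₂ * -u₃ = -(u₁ + u₂ + u₃ + u₁ * u₂ * u₃) by ring,
      show -u₁ * -u₂ + -u₂ * -u₃ + -u₃ * -u₁ = u₁ * u₂ + u₂ * u₃ + u₃ * u₁ by ring,
      mul_neg, neg_div, artanh_neg, artanh_neg, artanh_neg, artanh_neg] at this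
    linarith
  have a₁ : 0 < 1 + u₁ := by linarith [h₁.1]
  have a₂ : 0 < 1 + u₂ := by linarith [h₂.1]
  have a₃ : 0 < 1 + u₃ := by linarith [h₃.1]
  have b₁ : 0 < 1 - u₁ := by linarith [h₁.2]
  have b₂ : 0 < 1 - u₂ := by linarith [h₂.2]
  have b₃ : 0 < 1 - u₃ := by linarith [h₃.2]
  set P := (1 + u₁) * (1 + u₂) * (1 + u₃) with hP
  set Q := (1 - u₁) * (1 - u₂) * (1 - u₃) with hQ
  set M := u₁ + u₂ + u₃ + u₁ * u₂ * u₃ with hM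
  set σ := u₁ * u₂ + u₂ * u₃ + u₃ * u₁ with hσ
  have hS : 2 * (artanh u₁ + artanh u₂ + artanh u₃) = log P - log Q := by
    rw [Real.log_mul (by positivity) a₃.ne', Real.log_mul a₁.ne' a₂.ne',
      Real.log_mul (by positivity) b₃.ne', Real.log_mul b₁.ne' b₂.ne']
    linarith [two_mul_artanh h₁, two_mul_artanh h₂, two_mul_artanh h₃]
  have hDP : 1 + lam * σ + lam * M = 1 + lam * (P - 1) := by rw [hP, hM, hσ]; ring
  have hDQ : 1 + lam * σ - lam * M = 1 + lam * (Q - 1) := by rw [hQ, hM, hσ]; ring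
  have hT : 2 * artanh (lam * M / (1 + lam * σ)) =
      log (1 + lam * (P - 1)) - log (1 + lam * (Q - 1)) := by
    rw [two_mul_artanh_div (hDP ▸ one_add_mul_sub_one_pos (by positivity) hlam)
      (hDQ ▸ one_add_mul_sub_one_pos (by positivity) hlam), hDP, hDQ]
  have hQP : Q ≤ P := by nlinarith
  have hPQ : 2 ≤ P + Q → P - Q ≤ log P - log Q := fun h => by
    have := sum_add_prod_le_sum_artanh h₁ h₂ h₃ (by nlinarith) hN
    nlinarith
  have := log_interp_sub_le (by positivity) hQP hPQ hlam
  rw [← hT, ← hS] at this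
  have : artanh (lam * M / (1 + lam * σ)) ≤ lam * (artanh u₁ + artanh u₂ + artanh u₃) := by
    linarith
  nlinarith [mul_le_mul_of_nonneg_left this hN]

lemma artanh_sign_mul {s x : ℝ} (hs : s ∈ ({-1, 1} : Finset ℝ)) :
    artanh (s * x) = s * artanh x := by
  rcases Finset.mem_insert.1 hs with rfl | hs
  · simp [artanh_neg]
  · simp [Finset.mem_singleton.1 hs]

lemma N_mul_artanh_le {lam θ₁ θ₂ θ₃ s₂ s₃ : ℝ} (hlam : lam ∈ Icc (0 : ℝ) 1)
    (hθ₁ : θ₁ ∈ Ioo (-1 : ℝ) 1) (hθ₂ : θ₂ ∈ Ioo (-1 : ℝ) 1) (hθ₃ : θ₃ ∈ Ioo (-1 : ℝ) 1)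
    (hs₂ : s₂ ∈ ({-1, 1} : Finset ℝ)) (hs₃ : s₃ ∈ ({-1, 1} : Finset ℝ)) :
    N θ₁ θ₂ θ₃ s₂ s₃ * artanh (lam * N θ₁ θ₂ θ₃ s₂ s₃ / D lam θ₁ θ₂ θ₃ s₂ s₃)
      ≤ lam * N θ₁ θ₂ θ₃ s₂ s₃ * (artanh θ₁ + s₂ * artanh θ₂ + s₃ * artanh θ₃) := by
  have hmem : ∀ {s θ : ℝ}, s ∈ ({-1, 1} : Finset ℝ) → θ ∈ Ioo (-1 : ℝ) 1 →
      s * θ ∈ Ioo (-1 : ℝ) 1 := by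
    intro s θ hs hθ
    rcases Finset.mem_insert.1 hs with rfl | hs
    · exact ⟨by linarith [hθ.2], by linarith [hθ.1]⟩
    · simpa [Finset.mem_singleton.1 hs] using hθ
  have := sum_add_prod_mul_artanh_le hlam hθ₁ (hmem hs₂ hθ₂) (hmem hs₃ hθ₃)
  rw [artanh_sign_mul hs₂, artanh_sign_mul hs₃] at this
  convert this using 3 <;> simp only [N, D] <;> ring

/-- Lemma B.4 (Marwaha): the key inequality for the SKL multi-terminal contraction
coefficient for `r = 4`. For `λ ∈ [0,1]` and `θ₁, θ₂, θ₃ ∈ [0,1)`,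
`¼·Σ_{s₂,s₃∈{−1,1}} N(s₂,s₃)·artanh(λ·N(s₂,s₃)/D(s₂,s₃))
  ≤ λ·(θ₁·artanh θ₁ + θ₂·artanh θ₂ + θ₃·artanh θ₃)`. -/
theorem stmt4 (lam θ₁ θ₂ θ₃ : ℝ) (hlam : lam ∈ Set.Icc (0 : ℝ) 1)
    (hθ₁ : θ₁ ∈ Set.Ico (0 : ℝ) 1) (hθ₂ : θ₂ ∈ Set.Ico (0 : ℝ) 1)
    (hθ₃ : θ₃ ∈ Set.Ico (0 : ℝ) 1) :
    (1 / 4) * ∑ s₂ ∈ ({-1, 1} : Finset ℝ), ∑ s₃ ∈ ({-1, 1} : Finset ℝ),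
        N θ₁ θ₂ θ₃ s₂ s₃ * artanh (lam * N θ₁ θ₂ θ₃ s₂ s₃ / D lam θ₁ θ₂ θ₃ s₂ s₃)
      ≤ lam * (θ₁ * artanh θ₁ + θ₂ * artanh θ₂ + θ₃ * artanh θ₃) := by
  have hIoo : ∀ {θ : ℝ}, θ ∈ Ico (0 : ℝ) 1 → θ ∈ Ioo (-1 : ℝ) 1 :=
    fun h => ⟨by linarith [h.1], h.2⟩
  calc (1 / 4) * ∑ s₂ ∈ ({-1, 1} : Finset ℝ), ∑ s₃ ∈ ({-1, 1} : Finset ℝ),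
        N θ₁ θ₂ θ₃ s₂ s₃ * artanh (lam * N θ₁ θ₂ θ₃ s₂ s₃ / D lam θ₁ θ₂ θ₃ s₂ s₃)
      ≤ (1 / 4) * ∑ s₂ ∈ ({-1, 1} : Finset ℝ), ∑ s₃ ∈ ({-1, 1} : Finset ℝ),
        lam * N θ₁ θ₂ θ₃ s₂ s₃ * (artanh θ₁ + s₂ * artanh θ₂ + s₃ * artanh θ₃) := by
        refine mul_le_mul_of_nonneg_left (Finset.sum_le_sum fun _ hs₂ ↦ Finset.sum_le_sum
          fun _ hs₃ ↦ ?_) (by norm_num)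
        exact N_mul_artanh_le hlam (hIoo hθ₁) (hIoo hθ₂) (hIoo hθ₃) hs₂ hs₃
    _ = lam * (θ₁ * artanh θ₁ + θ₂ * artanh θ₂ + θ₃ * artanh θ₃) := by
        simp only [Finset.sum_pair (show (-1 : ℝ) ≠ 1 by norm_num), N]
        ring
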